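/- Let n ≥ 1 and let a, b, c, d > 0. Suppose ξ_1 > ξ_2 > … > ξ_n > 0 are real numbers such that, with p : ℂ → ℂ defined by p(ξ) = ∏_{j=1}^n (ξ² − ξ_j²), the difference equation A(ξ)·(p(ξ+i) − p(ξ)) + A(−ξ)·(p(ξ−i) − p(ξ)) = E_n · p(ξ) holds for every ξ ∈ ℂ with 2ξ(2ξ+i) ≠ 0, where A(ξ) = (ξ+ia)(ξ+ib)(ξ+ic)(ξ+id)/(2ξ(2ξ+i)) and E_n = −n(n+a+b+c+d−1). Then for all 1 ≤ j ≤ n one has ξ_j ≥ π(n+1−j)/k₋, and for all 1 ≤ j < j′ ≤ n one has ξ_j − ξ_{j′} ≥ π(j′−j)/k₋, where k₋ = 2(n−1) + a^{−1} + b^{−1} + c^{−1} + d^{−1}. -/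

import Mathlib

/-!
At a zero `x = ξ_k` the difference equation collapses to `w + conj w = 0` with
`w = A(x) p(x + i)`, so `A(-x) p(x - i) = conj w` is purely imaginary and nonzero. Writing every
factor of `A(-x) p(x - i)` as a positive multiple of `e^{i(arctan u - π/2)}` shows that its
argument is `θ_k` up to an odd multiple of `π/2`, where
`θ_k = ∑_{j ≠ k} (arctan (ξ_k - ξ_j) + arctan (ξ_k + ξ_j)) + ∑_{e ∈ {a,b,c,d}} arctan (ξ_k / e)`;
hence `θ_k ∈ πℤ`. The phase `θ_k` is positive and strictly increasing in `ξ_k`, so consecutive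
phases differ by at least `π` and `θ_k ≥ (n - k) π` (zero-based `k`). Since `arctan` is
`1`-Lipschitz with `arctan u ≤ u` for `u ≥ 0`, `θ_k ≤ k₋ ξ_k` and
`θ_j - θ_{j'} ≤ k₋ (ξ_j - ξ_{j'})`.
-/

open Real Finset ComplexConjugate

namespace Real

theorem monotone_sub_arctan : Monotone fun x : ℝ => x - arctan x := by
  refine monotone_of_deriv_nonneg (differentiable_id.sub differentiable_arctan) fun x => ?_
  rw [((hasDerivAt_id' x).fun_sub (hasDerivAt_arctan x)).deriv, sub_nonneg]
  exact div_le_one_of_le₀ (by nlinarith [sq_nonneg x]) (by positivity)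

theorem arctan_sub_arctan_le {x y : ℝ} (h : y ≤ x) : arctan x - arctan y ≤ x - y := by
  linarith [monotone_sub_arctan h]

theorem arctan_le_self {x : ℝ} (hx : 0 ≤ x) : arctan x ≤ x := by
  simpa using arctan_sub_arctan_le hx

theorem arctan_sub_add_arctan_add_nonneg {x : ℝ} (hx : 0 ≤ x) (y : ℝ) :
    0 ≤ arctan (x - y) + arctan (x + y) := by
  have h := arctan_strictMono.monotone (show y - x ≤ x + y by linarith)
  rw [← neg_sub x, arctan_neg] at h
  linarith

theorem arctan_sub_add_arctan_add_le {x : ℝ} (hx : 0 ≤ x) (y : ℝ) :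
    arctan (x - y) + arctan (x + y) ≤ 2 * x := by
  have h := arctan_sub_arctan_le (show y - x ≤ x + y by linarith)
  rw [← neg_sub x, arctan_neg] at h
  linarith

end Real

def HasPhase (w : ℂ) (θ : ℝ) : Prop :=
  ∃ r : ℝ, 0 < r ∧ w = r * Complex.exp (θ * Complex.I)

namespace HasPhase

theorem mul {w w' : ℂ} {θ θ' : ℝ} (h : HasPhase w θ) (h' : HasPhase w' θ') :
    HasPhase (w * w') (θ + θ') := by
  obtain ⟨r, hr, rfl⟩ := h
  obtain ⟨r', hr', rfl⟩ := h'
  refine ⟨r * r', mul_pos hr hr', ?_⟩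
  push_cast
  rw [add_mul, Complex.exp_add]
  ring

theorem prod {ι : Type*} {s : Finset ι} {w : ι → ℂ} {θ : ι → ℝ}
    (h : ∀ j ∈ s, HasPhase (w j) (θ j)) : HasPhase (∏ j ∈ s, w j) (∑ j ∈ s, θ j) := by
  classical
  induction s using Finset.induction_on with
  | empty => exact ⟨1, one_pos, by simp⟩
  | insert j s hj ih =>
    rw [prod_insert hj, sum_insert hj]
    exact (h j (mem_insert_self j s)).mul (ih fun i hi => h i (mem_insert_of_mem hi))

theorem ofReal_mul {w : ℂ} {θ r : ℝ} (hr : 0 < r) (h : HasPhase w θ) : HasPhase (r * w) θ := by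
  obtain ⟨s, hs, rfl⟩ := h
  exact ⟨r * s, mul_pos hr hs, by push_cast; ring⟩

theorem cos_eq_zero {w : ℂ} {θ : ℝ} (h : HasPhase w θ) (hw : w.re = 0) : cos θ = 0 := by
  obtain ⟨r, hr, rfl⟩ := h
  rw [Complex.exp_mul_I, ← Complex.ofReal_cos, ← Complex.ofReal_sin] at hw
  simp only [Complex.mul_re, Complex.ofReal_re, Complex.ofReal_im, Complex.add_re,
    Complex.I_re, Complex.I_im] at hw
  simpa [hr.ne'] using hw

end HasPhase

theorem hasPhase_one_add_mul_I (u : ℝ) : HasPhase (1 + u * Complex.I) (arctan u) := by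
  refine ⟨√(1 + u ^ 2), by positivity, ?_⟩
  have hs : (√(1 + u ^ 2) : ℂ) ≠ 0 := Complex.ofReal_ne_zero.2 (by positivity)
  rw [Complex.exp_mul_I, ← Complex.ofReal_cos, ← Complex.ofReal_sin, cos_arctan, sin_arctan]
  push_cast
  field_simp

theorem hasPhase_neg_I : HasPhase (-Complex.I) (-(π / 2)) :=
  ⟨1, one_pos, by
    push_cast
    rw [Complex.exp_mul_I, Complex.cos_neg, Complex.sin_neg, Complex.cos_pi_div_two,
      Complex.sin_pi_div_two]
    ring⟩

theorem hasPhase_sub_mul_I (x : ℝ) {y : ℝ} (hy : 0 < y) :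
    HasPhase (x - y * Complex.I) (arctan (x / y) - π / 2) := by
  have h := ((hasPhase_one_add_mul_I (x / y)).mul hasPhase_neg_I).ofReal_mul hy
  rw [← sub_eq_add_neg] at h
  convert h using 1
  have hy' : (y : ℂ) ≠ 0 := Complex.ofReal_ne_zero.2 hy.ne'
  push_cast
  field_simp
  ring_nf
  rw [Complex.I_sq]
  ring

theorem hasPhase_sub_I (x : ℝ) : HasPhase (x - Complex.I) (arctan x - π / 2) := by
  simpa using hasPhase_sub_mul_I x one_pos

theorem Fin.sub_le_sub_of_strictAnti {n : ℕ} {f : Fin n → ℤ} (hf : StrictAnti f) {i j : Fin n}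
    (hij : i ≤ j) : (j : ℤ) - i ≤ f i - f j := by
  cases n with
  | zero => exact i.elim0
  | succ n =>
    have hg : Antitone fun i : Fin (n + 1) => f i + i := Fin.antitone_iff_succ_le.2 fun i => by
      have := hf (Fin.castSucc_lt_succ (i := i))
      simp only [Fin.val_succ, Fin.val_castSucc]
      push_cast
      omega
    have : f j + j ≤ f i + i := hg hij
    omega

theorem Fin.sub_le_of_strictAnti {n : ℕ} {f : Fin n → ℤ} (hf : StrictAnti f)
    (hpos : ∀ i, 0 < f i) (i : Fin n) : (n : ℤ) - i ≤ f i := by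
  have hn : n - 1 < n := by have := i.isLt; omega
  have hgap := Fin.sub_le_sub_of_strictAnti hf (i := i) (j := ⟨n - 1, hn⟩)
    (Fin.le_def.2 (by dsimp; omega))
  have := hpos ⟨n - 1, hn⟩
  rw [Fin.val_mk] at hgap
  omega

theorem Fin.mul_sub_le_sub_of_strictAnti_of_int_mul {n : ℕ} {S : Fin n → ℝ} {c : ℝ} (hc : 0 < c)
    (hS : StrictAnti S) (hint : ∀ i, ∃ m : ℤ, S i = m * c) {i j : Fin n} (hij : i ≤ j) :
    c * ((j : ℝ) - i) ≤ S i - S j := by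
  choose m hm using hint
  obtain rfl : S = fun i => (m i : ℝ) * c := funext hm
  have hm_anti : StrictAnti m := fun i j hij => by
    exact_mod_cast lt_of_mul_lt_mul_right (hS hij) hc.le
  have : ((j : ℝ) - i) ≤ m i - m j := by exact_mod_cast Fin.sub_le_sub_of_strictAnti hm_anti hij
  nlinarith

theorem Fin.mul_sub_le_of_strictAnti_of_int_mul {n : ℕ} {S : Fin n → ℝ} {c : ℝ} (hc : 0 < c)
    (hS : StrictAnti S) (hpos : ∀ i, 0 < S i) (hint : ∀ i, ∃ m : ℤ, S i = m * c) (i : Fin n) :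
    c * ((n : ℝ) - i) ≤ S i := by
  choose m hm using hint
  obtain rfl : S = fun i => (m i : ℝ) * c := funext hm
  have hm_anti : StrictAnti m := fun i j hij => by
    exact_mod_cast lt_of_mul_lt_mul_right (hS hij) hc.le
  have hm_pos (i : Fin n) : 0 < m i := by exact_mod_cast pos_of_mul_pos_left (hpos i) hc.le
  have : ((n : ℝ) - i) ≤ m i := by exact_mod_cast Fin.sub_le_of_strictAnti hm_anti hm_pos i
  nlinarith

section Wilson

variable {ι : Type*} [Fintype ι] (ξ : ι → ℝ) (a b c d : ℝ)

noncomputable def wilsonP (z : ℂ) : ℂ := ∏ j, (z ^ 2 - (ξ j : ℂ) ^ 2)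

noncomputable def wilsonA (z : ℂ) : ℂ :=
  ((z + Complex.I * (a : ℂ)) * (z + Complex.I * (b : ℂ)) *
    (z + Complex.I * (c : ℂ)) * (z + Complex.I * (d : ℂ))) / (2 * z * (2 * z + Complex.I))

theorem wilsonP_conj (z : ℂ) : wilsonP ξ (conj z) = conj (wilsonP ξ z) := by
  simp [wilsonP, map_prod]

theorem wilsonA_neg_conj (z : ℂ) : wilsonA a b c d (-conj z) = conj (wilsonA a b c d z) := by
  simp only [wilsonA, map_div₀, map_mul, map_add, Complex.conj_ofReal, Complex.conj_I, map_ofNat]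
  congr 1 <;> ring

theorem re_wilsonA_neg_mul_wilsonP_eq_zero {x : ℝ}
    (h : wilsonA a b c d x * wilsonP ξ (x + Complex.I) +
      wilsonA a b c d (-x) * wilsonP ξ (x - Complex.I) = 0) :
    (wilsonA a b c d (-x) * wilsonP ξ (x - Complex.I)).re = 0 := by
  have hconj : wilsonA a b c d (-x) * wilsonP ξ (x - Complex.I) =
      conj (wilsonA a b c d x * wilsonP ξ (x + Complex.I)) := by
    rw [map_mul, ← wilsonA_neg_conj, ← wilsonP_conj]
    simp [sub_eq_add_neg]
  have hre := congrArg Complex.re h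
  rw [Complex.add_re, hconj, Complex.conj_re, Complex.zero_re] at hre
  rw [hconj, Complex.conj_re]
  linarith

variable [DecidableEq ι]

noncomputable def wilsonPhase (k : ι) : ℝ :=
  ∑ j ∈ univ.erase k, (arctan (ξ k - ξ j) + arctan (ξ k + ξ j)) +
    (arctan (ξ k / a) + arctan (ξ k / b) + arctan (ξ k / c) + arctan (ξ k / d))

theorem wilsonA_neg_mul_wilsonP_sub_I {k : ι} (hk : ξ k ≠ 0) :
    wilsonA a b c d (-ξ k) * wilsonP ξ (ξ k - Complex.I) =
      ((2 * ξ k)⁻¹ : ℝ) * (-Complex.I * (((ξ k - a * Complex.I) * (ξ k - b * Complex.I) *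
        (ξ k - c * Complex.I) * (ξ k - d * Complex.I)) *
        ∏ j ∈ univ.erase k, ((((ξ k - ξ j : ℝ) : ℂ) - Complex.I) *
          (((ξ k + ξ j : ℝ) : ℂ) - Complex.I)))) := by
  have hx : (ξ k : ℂ) ≠ 0 := Complex.ofReal_ne_zero.2 hk
  have hxI : 2 * (ξ k : ℂ) - Complex.I ≠ 0 := fun h => by simpa using congrArg Complex.im h
  have hA : wilsonA a b c d (-ξ k) = ((ξ k - a * Complex.I) * (ξ k - b * Complex.I) *
      (ξ k - c * Complex.I) * (ξ k - d * Complex.I)) / (2 * ξ k * (2 * ξ k - Complex.I)) := by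
    rw [wilsonA]
    congr 1 <;> ring
  -- the factor `j = k` of `p (ξ k - i)` cancels the pole of `A (-ξ k)` at `2 ξ k - i`
  have hself :
      ((ξ k : ℂ) - Complex.I) ^ 2 - (ξ k : ℂ) ^ 2 = -Complex.I * (2 * ξ k - Complex.I) := by
    ring
  have hpair : ∀ j ∈ univ.erase k, ((ξ k : ℂ) - Complex.I) ^ 2 - (ξ j : ℂ) ^ 2 =
      (((ξ k - ξ j : ℝ) : ℂ) - Complex.I) * (((ξ k + ξ j : ℝ) : ℂ) - Complex.I) :=
    fun j _ => by push_cast; ring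
  rw [wilsonP, ← mul_prod_erase univ _ (mem_univ k), prod_congr rfl hpair, hself, hA]
  generalize (∏ j ∈ univ.erase k, _ : ℂ) = Q
  rw [div_mul_eq_mul_div, div_eq_iff (mul_ne_zero (mul_ne_zero two_ne_zero hx) hxI)]
  push_cast
  field_simp

variable {ξ a b c d}

theorem hasPhase_wilsonA_neg_mul_wilsonP_sub_I (ha : 0 < a) (hb : 0 < b) (hc : 0 < c)
    (hd : 0 < d) {k : ι} (hk : 0 < ξ k) :
    HasPhase (wilsonA a b c d (-ξ k) * wilsonP ξ (ξ k - Complex.I))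
      (wilsonPhase ξ a b c d k - (#(univ.erase k) + 2) * π - π / 2) := by
  have hN := (((hasPhase_sub_mul_I (ξ k) ha).mul (hasPhase_sub_mul_I (ξ k) hb)).mul
    (hasPhase_sub_mul_I (ξ k) hc)).mul (hasPhase_sub_mul_I (ξ k) hd)
  have hQ := HasPhase.prod (s := univ.erase k) fun j _ =>
    (hasPhase_sub_I (ξ k - ξ j)).mul (hasPhase_sub_I (ξ k + ξ j))
  rw [wilsonA_neg_mul_wilsonP_sub_I ξ a b c d hk.ne']
  convert (hasPhase_neg_I.mul (hN.mul hQ)).ofReal_mul (inv_pos.2 (mul_pos two_pos hk)) using 1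
  simp only [wilsonPhase, sum_add_distrib, sum_sub_distrib, sum_const, nsmul_eq_mul]
  ring

theorem exists_wilsonPhase_eq_int_mul_pi (ha : 0 < a) (hb : 0 < b) (hc : 0 < c)
    (hd : 0 < d) {E : ℂ}
    (heq : ∀ z : ℂ, 2 * z * (2 * z + Complex.I) ≠ 0 →
      wilsonA a b c d z * (wilsonP ξ (z + Complex.I) - wilsonP ξ z) +
        wilsonA a b c d (-z) * (wilsonP ξ (z - Complex.I) - wilsonP ξ z) = E * wilsonP ξ z)
    {k : ι} (hk : 0 < ξ k) :
    ∃ m : ℤ, wilsonPhase ξ a b c d k = m * π := by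
  have hroot : wilsonP ξ (ξ k) = 0 := prod_eq_zero (mem_univ k) (sub_self _)
  have hden : 2 * (ξ k : ℂ) * (2 * ξ k + Complex.I) ≠ 0 := by
    refine mul_ne_zero (mul_ne_zero two_ne_zero (by exact_mod_cast hk.ne')) fun h => ?_
    simpa using congrArg Complex.im h
  have hsum : wilsonA a b c d (ξ k) * wilsonP ξ (ξ k + Complex.I) +
      wilsonA a b c d (-ξ k) * wilsonP ξ (ξ k - Complex.I) = 0 := by
    simpa [hroot] using heq (ξ k) hden
  obtain ⟨m, hm⟩ := Real.cos_eq_zero_iff.1 <|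
    (hasPhase_wilsonA_neg_mul_wilsonP_sub_I ha hb hc hd hk).cos_eq_zero
      (re_wilsonA_neg_mul_wilsonP_eq_zero ξ a b c d hsum)
  exact ⟨m + #(univ.erase k) + 3, by push_cast; linarith⟩

theorem wilsonPhase_pos (ha : 0 < a) (hb : 0 < b) (hc : 0 < c) (hd : 0 < d) {k : ι}
    (hk : 0 < ξ k) : 0 < wilsonPhase ξ a b c d k := by
  have hpairs := sum_nonneg fun j (_ : j ∈ univ.erase k) =>
    arctan_sub_add_arctan_add_nonneg hk.le (ξ j)
  have := arctan_pos.2 (div_pos hk ha)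
  have := arctan_pos.2 (div_pos hk hb)
  have := arctan_pos.2 (div_pos hk hc)
  have := arctan_pos.2 (div_pos hk hd)
  rw [wilsonPhase]
  linarith

theorem wilsonPhase_le (ha : 0 < a) (hb : 0 < b) (hc : 0 < c) (hd : 0 < d) {k : ι}
    (hk : 0 < ξ k) :
    wilsonPhase ξ a b c d k ≤
      (2 * ((Fintype.card ι : ℝ) - 1) + a⁻¹ + b⁻¹ + c⁻¹ + d⁻¹) * ξ k := by
  have hcard : (#(univ.erase k) : ℝ) + 1 = Fintype.card ι := by
    exact_mod_cast card_erase_add_one (mem_univ k)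
  have hpairs := sum_le_card_nsmul (univ.erase k) _ _ fun j _ =>
    arctan_sub_add_arctan_add_le hk.le (ξ j)
  rw [nsmul_eq_mul] at hpairs
  have hdiv : ∀ {e : ℝ}, 0 < e → arctan (ξ k / e) ≤ ξ k * e⁻¹ := fun he =>
    div_eq_mul_inv (ξ k) _ ▸ arctan_le_self (div_nonneg hk.le he.le)
  have := hdiv ha
  have := hdiv hb
  have := hdiv hc
  have := hdiv hd
  rw [wilsonPhase, ← hcard]
  linarith

theorem wilsonPhase_sub_wilsonPhase {k k' : ι} (hne : k ≠ k') :
    wilsonPhase ξ a b c d k - wilsonPhase ξ a b c d k' =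
      2 * arctan (ξ k - ξ k') +
      ∑ j ∈ (univ.erase k).erase k', (arctan (ξ k - ξ j) + arctan (ξ k + ξ j) -
        (arctan (ξ k' - ξ j) + arctan (ξ k' + ξ j))) +
      (arctan (ξ k / a) - arctan (ξ k' / a) + (arctan (ξ k / b) - arctan (ξ k' / b)) +
        (arctan (ξ k / c) - arctan (ξ k' / c)) + (arctan (ξ k / d) - arctan (ξ k' / d))) := by
  rw [wilsonPhase, wilsonPhase, ← add_sum_erase _ _ (mem_erase.2 ⟨hne.symm, mem_univ k'⟩),
    ← add_sum_erase _ _ (mem_erase.2 ⟨hne, mem_univ k⟩), erase_right_comm, sum_sub_distrib,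
    ← neg_sub (ξ k), arctan_neg, add_comm (ξ k')]
  ring

theorem wilsonPhase_lt (ha : 0 < a) (hb : 0 < b) (hc : 0 < c) (hd : 0 < d) {k k' : ι}
    (hlt : ξ k' < ξ k) : wilsonPhase ξ a b c d k' < wilsonPhase ξ a b c d k := by
  have hmono := arctan_strictMono.monotone
  have hpairs := sum_nonneg fun j (_ : j ∈ (univ.erase k).erase k') =>
    sub_nonneg.2 (add_le_add (hmono (sub_le_sub_right hlt.le (ξ j)))
      (hmono (add_le_add_left hlt.le (ξ j))))
  have := arctan_pos.2 (sub_pos.2 hlt)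
  have := hmono (div_le_div_of_nonneg_right hlt.le ha.le)
  have := hmono (div_le_div_of_nonneg_right hlt.le hb.le)
  have := hmono (div_le_div_of_nonneg_right hlt.le hc.le)
  have := hmono (div_le_div_of_nonneg_right hlt.le hd.le)
  rw [← sub_pos, wilsonPhase_sub_wilsonPhase (ne_of_apply_ne ξ hlt.ne')]
  linarith

theorem wilsonPhase_sub_le (ha : 0 < a) (hb : 0 < b) (hc : 0 < c) (hd : 0 < d) {k k' : ι}
    (hlt : ξ k' < ξ k) :
    wilsonPhase ξ a b c d k - wilsonPhase ξ a b c d k' ≤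
      (2 * ((Fintype.card ι : ℝ) - 1) + a⁻¹ + b⁻¹ + c⁻¹ + d⁻¹) * (ξ k - ξ k') := by
  have hne : k ≠ k' := ne_of_apply_ne ξ hlt.ne'
  have hcard : (#((univ.erase k).erase k') : ℝ) + 1 + 1 = Fintype.card ι := by
    exact_mod_cast congrArg (· + 1) (card_erase_add_one (mem_erase.2 ⟨hne.symm, mem_univ k'⟩))
      |>.trans (card_erase_add_one (mem_univ k))
  have hpairs := sum_le_card_nsmul ((univ.erase k).erase k')
    (fun j => arctan (ξ k - ξ j) + arctan (ξ k + ξ j) - (arctan (ξ k' - ξ j) + arctan (ξ k' + ξ j)))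
    (2 * (ξ k - ξ k')) fun j _ => by
      linarith [arctan_sub_arctan_le (sub_le_sub_right hlt.le (ξ j)),
        arctan_sub_arctan_le (add_le_add_left hlt.le (ξ j))]
  rw [nsmul_eq_mul] at hpairs
  have := arctan_le_self (sub_pos.2 hlt).le
  have hdiv : ∀ {e : ℝ}, 0 < e → arctan (ξ k / e) - arctan (ξ k' / e) ≤ (ξ k - ξ k') * e⁻¹ :=
    fun he => by
      simpa only [sub_div, div_eq_mul_inv, sub_mul] using
        arctan_sub_arctan_le (div_le_div_of_nonneg_right hlt.le he.le)
  have := hdiv ha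
  have := hdiv hb
  have := hdiv hc
  have := hdiv hd
  rw [wilsonPhase_sub_wilsonPhase hne, ← hcard]
  linarith

end Wilson

theorem wilson_zero_bounds
    (n : ℕ) (a b c d : ℝ)
    (ha : 0 < a) (hb : 0 < b) (hc : 0 < c) (hd : 0 < d)
    (ξ : Fin n → ℝ)
    (hpos : ∀ j, 0 < ξ j)
    (hdec : ∀ j j' : Fin n, j < j' → ξ j' < ξ j)
    (p : ℂ → ℂ)
    (hp : ∀ z : ℂ, p z = ∏ j : Fin n, (z ^ 2 - ((ξ j : ℂ)) ^ 2))
    (A : ℂ → ℂ)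
    (hA : ∀ z : ℂ, A z =
      ((z + Complex.I * (a : ℂ)) * (z + Complex.I * (b : ℂ)) *
       (z + Complex.I * (c : ℂ)) * (z + Complex.I * (d : ℂ))) /
      (2 * z * (2 * z + Complex.I)))
    (En : ℝ)
    (heq : ∀ z : ℂ, 2 * z * (2 * z + Complex.I) ≠ 0 →
      A z * (p (z + Complex.I) - p z) + A (-z) * (p (z - Complex.I) - p z)
        = (En : ℂ) * p z)
    (km : ℝ)
    (hkm : km = 2 * ((n : ℝ) - 1) + a⁻¹ + b⁻¹ + c⁻¹ + d⁻¹) :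
    (∀ j : Fin n, π * ((n : ℝ) - j.val) / km ≤ ξ j) ∧
    (∀ j j' : Fin n, j < j' → π * ((j'.val : ℝ) - j.val) / km ≤ ξ j - ξ j') := by
  obtain rfl : p = wilsonP ξ := funext hp
  obtain rfl : A = wilsonA a b c d := funext hA
  have hS : StrictAnti (wilsonPhase ξ a b c d) := fun k k' hkk' =>
    wilsonPhase_lt ha hb hc hd (hdec k k' hkk')
  have hint (k : Fin n) : ∃ m : ℤ, wilsonPhase ξ a b c d k = m * π :=
    exists_wilsonPhase_eq_int_mul_pi ha hb hc hd heq (hpos k)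
  have hup (j : Fin n) : wilsonPhase ξ a b c d j ≤ km * ξ j := by
    simpa only [Fintype.card_fin, ← hkm] using wilsonPhase_le ha hb hc hd (hpos j)
  have hkm_nonneg (j : Fin n) : 0 ≤ km :=
    (pos_of_mul_pos_left ((wilsonPhase_pos ha hb hc hd (hpos j)).trans_le (hup j)) (hpos j).le).le
  refine ⟨fun j => div_le_of_le_mul₀ (hkm_nonneg j) (hpos j).le ?_,
    fun j j' hjj' => div_le_of_le_mul₀ (hkm_nonneg j) (sub_pos.2 (hdec j j' hjj')).le ?_⟩
  · have := Fin.mul_sub_le_of_strictAnti_of_int_mul pi_pos hS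
      (fun k => wilsonPhase_pos ha hb hc hd (hpos k)) hint j
    linarith [hup j]
  · have hsub := wilsonPhase_sub_le ha hb hc hd (hdec j j' hjj')
    rw [Fintype.card_fin, ← hkm] at hsub
    linarith [Fin.mul_sub_le_sub_of_strictAnti_of_int_mul pi_pos hS hint hjj'.le]
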